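/- Let G be a simple graph with edge ideal I(G) ⊆ S = K[x1,…,xn] and let x_i x_j be an edge of G. Then (I(G)^2 : x_i x_j) = I(G) + (x_p x_q : x_p ∈ N_G(x_i), x_q ∈ N_G(x_j)), where the products x_p x_q include squares x_k^2 for x_k ∈ N_G(x_i) ∩ N_G(x_j). -/

import Mathlib

/-!
Every ideal involved is a monomial ideal, and `f ∈ (J : x^u)` for a monomial ideal `J` iff
`x^v x^u ∈ J` for every monomial `x^v` of `f`; so the identity reduces to exponent vectors. For an
edge `ij` and a monomial `m`, suppose `x_a x_b x_c x_d ∣ m x_i x_j` with `ab`, `cd` edges but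
neither `x_a x_b` nor `x_c x_d` divides `m`. Then each of the two edges has an endpoint, say `a`
and `c`, with `x_a ∤ m` and `x_c ∤ m`; both must be supplied by `x_i x_j`, which forces
`{a, c} = {i, j}`, and cancelling `x_i x_j` leaves `x_b x_d ∣ m` with `b`, `d` neighbours of
`a`, `c`.
-/

open MvPolynomial

/-- The closed neighborhood of a vertex. -/
def closedNbhd {V : Type} (G : SimpleGraph V) (x : V) : Set V :=
  insert x (G.neighborSet x)

/-- A finite set of vertices is a star packing if the closed neighborhoods of its
elements (the vertex sets of the corresponding stars) are pairwise disjoint. -/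
def IsStarPacking {V : Type} (G : SimpleGraph V) (s : Finset V) : Prop :=
  (s : Set V).Pairwise fun x y => Disjoint (closedNbhd G x) (closedNbhd G y)

/-- The star packing number `α₂(G)`: the maximum size of a star packing. -/
noncomputable def starPackingNumber {V : Type} (G : SimpleGraph V) : ℕ :=
  sSup {n | ∃ s : Finset V, IsStarPacking G s ∧ s.card = n}

/-- The whiskered triangle `W(K₃)`: a triangle on vertices `0, 1, 2` with pendant
vertices `3, 4, 5` attached to them respectively. -/
def whiskeredTriangle : SimpleGraph (Fin 6) :=
  SimpleGraph.fromEdgeSet {s(0, 1), s(0, 2), s(1, 2), s(0, 3), s(1, 4), s(2, 5)}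

/-- `G` is `W(K₃)`-free: no induced subgraph of `G` is isomorphic to the whiskered
triangle. -/
def WK3Free {V : Type} (G : SimpleGraph V) : Prop :=
  ¬ ∃ f : Fin 6 ↪ V, ∀ a b, whiskeredTriangle.Adj a b ↔ G.Adj (f a) (f b)

/-- The edge ideal of a graph `G`, in the polynomial ring `K[x_v : v ∈ V]`. -/
noncomputable def edgeIdeal {V : Type} (K : Type) [Field K] (G : SimpleGraph V) :
    Ideal (MvPolynomial V K) :=
  Ideal.span {m | ∃ x y, G.Adj x y ∧ m = X x * X y}

open Finsupp (single)
open scoped Pointwise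

def pairExponents {V : Type*} (r : V → V → Prop) : Set (V →₀ ℕ) :=
  {s | ∃ p q, r p q ∧ s = single p 1 + single q 1}

section MonomialIdeal

variable {σ R : Type*} [CommSemiring R]

theorem X_mul_X_eq_monomial (p q : σ) :
    (X p * X q : MvPolynomial σ R) = monomial (single p 1 + single q 1) 1 := by
  rw [X, X, monomial_mul, one_mul]

theorem setOf_X_mul_X_eq_image (r : σ → σ → Prop) :
    {m : MvPolynomial σ R | ∃ p q, r p q ∧ m = X p * X q} =
      (fun s => monomial s 1) '' pairExponents r := by
  ext m
  simp only [pairExponents, Set.mem_ofPred_eq, Set.mem_image, X_mul_X_eq_monomial]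
  constructor
  · rintro ⟨p, q, hpq, rfl⟩
    exact ⟨_, ⟨p, q, hpq, rfl⟩, rfl⟩
  · rintro ⟨_, ⟨p, q, hpq, rfl⟩, rfl⟩
    exact ⟨p, q, hpq, rfl⟩

theorem span_monomial_image_mul_span (s t : Set (σ →₀ ℕ)) :
    Ideal.span ((fun s => monomial s (1 : R)) '' s) * Ideal.span ((fun s => monomial s 1) '' t) =
      Ideal.span ((fun s => monomial s 1) '' (s + t)) := by
  rw [Ideal.span_mul_span']
  congr 1
  ext m
  simp only [Set.mem_mul, Set.mem_image, Set.mem_add]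
  constructor
  · rintro ⟨_, ⟨a, ha, rfl⟩, _, ⟨b, hb, rfl⟩, rfl⟩
    exact ⟨a + b, ⟨a, ha, b, hb, rfl⟩, by rw [monomial_mul, one_mul]⟩
  · rintro ⟨_, ⟨a, ha, b, hb, rfl⟩, rfl⟩
    exact ⟨_, ⟨a, ha, rfl⟩, _, ⟨b, hb, rfl⟩, by rw [monomial_mul, one_mul]⟩

theorem support_mul_monomial_one (f : MvPolynomial σ R) (u : σ →₀ ℕ) :
    (f * monomial u 1).support = f.support.map (addRightEmbedding u) :=
  AddMonoidAlgebra.support_coeff_mul_single f _ (by simp) _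

theorem mem_span_monomial_image_colon_iff {s : Set (σ →₀ ℕ)} {u : σ →₀ ℕ}
    {f : MvPolynomial σ R} :
    f ∈ (Ideal.span ((fun s => monomial s (1 : R)) '' s)).colon
        (Ideal.span {monomial u (1 : R)} : Set (MvPolynomial σ R)) ↔
      ∀ v ∈ f.support, ∃ t ∈ s, t ≤ v + u := by
  rw [Ideal.mem_colon_span_singleton, mem_ideal_span_monomial_image, support_mul_monomial_one,
    Finset.forall_mem_map]
  rfl

end MonomialIdeal

section Exponents

variable {V : Type*}

theorem single_add_single_le {a b : V} {m : V →₀ ℕ} (hab : a ≠ b) (ha : m a ≠ 0)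
    (hb : m b ≠ 0) : single a 1 + single b 1 ≤ m := by
  classical
  intro v
  simp only [Finsupp.add_apply, Finsupp.single_apply]
  grind

theorem exists_adj_apply_eq_zero_of_not_le {G : SimpleGraph V} {a b : V} {m : V →₀ ℕ}
    (hab : G.Adj a b) (h : ¬ single a 1 + single b 1 ≤ m) :
    ∃ a' b', G.Adj a' b' ∧ single a' 1 + single b' 1 = single a 1 + single b 1 ∧
      m a' = 0 := by
  by_cases ha : m a = 0
  · exact ⟨a, b, hab, rfl, ha⟩
  by_cases hb : m b = 0
  · exact ⟨b, a, hab.symm, add_comm _ _, hb⟩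
  exact absurd (single_add_single_le hab.ne ha hb) h

theorem eq_and_eq_or_of_single_add_single_le {a c i j : V} {m : V →₀ ℕ} (ha : m a = 0)
    (hc : m c = 0) (h : single a 1 + single c 1 ≤ m + (single i 1 + single j 1)) :
    a = i ∧ c = j ∨ a = j ∧ c = i := by
  classical
  have ha' := h a
  have hc' := h c
  simp only [Finsupp.add_apply, Finsupp.single_apply] at ha' hc'
  grind

variable {G : SimpleGraph V} {i j : V}

theorem exists_mem_pairExponents_le_of_add_le {a b c d : V} {m : V →₀ ℕ}
    (hab : G.Adj a b) (hcd : G.Adj c d)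
    (h : single a 1 + single b 1 + (single c 1 + single d 1) ≤
      m + (single i 1 + single j 1)) :
    ∃ s ∈ pairExponents G.Adj ∪ pairExponents (fun p q => G.Adj i p ∧ G.Adj j q),
      s ≤ m := by
  by_cases hab_le : single a 1 + single b 1 ≤ m
  · exact ⟨_, Or.inl ⟨a, b, hab, rfl⟩, hab_le⟩
  by_cases hcd_le : single c 1 + single d 1 ≤ m
  · exact ⟨_, Or.inl ⟨c, d, hcd, rfl⟩, hcd_le⟩
  obtain ⟨a, b, hab, hsab, ha⟩ := exists_adj_apply_eq_zero_of_not_le hab hab_le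
  obtain ⟨c, d, hcd, hscd, hc⟩ := exists_adj_apply_eq_zero_of_not_le hcd hcd_le
  rw [← hsab, ← hscd] at h
  have hac : single a 1 + single c 1 ≤ m + (single i 1 + single j 1) :=
    (add_le_add le_self_add le_self_add).trans h
  rcases eq_and_eq_or_of_single_add_single_le ha hc hac with ⟨rfl, rfl⟩ | ⟨rfl, rfl⟩
  · refine ⟨_, Or.inr ⟨b, d, ⟨hab, hcd⟩, rfl⟩,
      le_of_add_le_add_right (a := single a 1 + single c 1) ?_⟩
    convert h using 1
    abel
  · refine ⟨_, Or.inr ⟨d, b, ⟨hcd, hab⟩, rfl⟩,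
      le_of_add_le_add_right (a := single c 1 + single a 1) ?_⟩
    convert h using 1
    abel

theorem exists_mem_pairExponents_add_le_add_iff (hij : G.Adj i j) (m : V →₀ ℕ) :
    (∃ s ∈ pairExponents G.Adj + pairExponents G.Adj,
        s ≤ m + (single i 1 + single j 1)) ↔
      ∃ s ∈ pairExponents G.Adj ∪ pairExponents (fun p q => G.Adj i p ∧ G.Adj j q),
        s ≤ m := by
  constructor
  · rintro ⟨_, ⟨_, ⟨a, b, hab, rfl⟩, _, ⟨c, d, hcd, rfl⟩, rfl⟩, h⟩
    exact exists_mem_pairExponents_le_of_add_le hab hcd h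
  · rintro ⟨_, ⟨x, y, hxy, rfl⟩ | ⟨p, q, ⟨hp, hq⟩, rfl⟩, h⟩
    · exact ⟨_, Set.add_mem_add ⟨x, y, hxy, rfl⟩ ⟨i, j, hij, rfl⟩, add_le_add_left h _⟩
    · refine ⟨_, Set.add_mem_add ⟨i, p, hp, rfl⟩ ⟨j, q, hq, rfl⟩, ?_⟩
      convert add_le_add_left h (single i 1 + single j 1) using 1
      abel

end Exponents

/-- For any edge `x_i x_j` of `G`, `(I(G)² : x_i x_j)` equals `I(G)` plus the ideal
generated by the products `x_p x_q` with `x_p ∈ N_G(x_i)` and `x_q ∈ N_G(x_j)`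
(including squares `x_k²` for common neighbors `x_k`). -/
theorem colon_square_by_edge {V : Type} (K : Type) [Field K]
    (G : SimpleGraph V) (xi xj : V) (hij : G.Adj xi xj) :
    (edgeIdeal K G ^ 2).colon ((Ideal.span {X xi * X xj} : Ideal (MvPolynomial V K)) : Set (MvPolynomial V K)) =
      edgeIdeal K G +
        Ideal.span {m | ∃ p q, G.Adj xi p ∧ G.Adj xj q ∧ m = X p * X q} := by
  ext f
  simp_rw [← and_assoc]
  rw [edgeIdeal, setOf_X_mul_X_eq_image, setOf_X_mul_X_eq_image, X_mul_X_eq_monomial, sq,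
    span_monomial_image_mul_span, mem_span_monomial_image_colon_iff, Submodule.add_eq_sup,
    ← Ideal.span_union, ← Set.image_union, mem_ideal_span_monomial_image]
  exact forall₂_congr fun v _ => exists_mem_pairExponents_add_le_add_iff hij v
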